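/- Let ρ, V : ℝ → ℝ be twice continuously differentiable, let D > 0, and fix x₀ ∈ ℝ. Then as (h₁, h₂) → (0⁺, 0⁺) (with no constraint on the ratio h₁/h₂), the non-uniform Wang–Peskin–Elston operator (2/(h₁+h₂))·[ (D/h₂)·( A(V(x₀) − V(x₀+h₂))·ρ(x₀+h₂) − A(V(x₀+h₂) − V(x₀))·ρ(x₀) ) − (D/h₁)·( A(V(x₀−h₁) − V(x₀))·ρ(x₀) − A(V(x₀) − V(x₀−h₁))·ρ(x₀−h₁) ) ] converges to D·(ρ''(x₀) + ρ'(x₀)·V'(x₀) + ρ(x₀)·V''(x₀)); i.e., the non-uniform discretization of the Fokker–Planck equation is consistent. -/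

import Mathlib

/-!
With `δ = V x - V x₀`, the identity `A(-δ) = A(δ) + δ` turns the scaled net flux
`(A(V x₀ - V x) ρ x - A(V x - V x₀) ρ x₀) / (x - x₀)` between `x₀` and a neighbour `x` into
`Φ x = A(V x₀ - V x) · ρ[x₀, x] + ρ x₀ · V[x₀, x]` (divided differences, `dslope`). `Φ` is
differentiable at `x₀` with `Φ'(x₀) = (ρ'' + ρ'V' + ρV'')(x₀) / 2`, because a divided difference
`f[x₀, x]` has derivative `f''(x₀)/2` in `x` and `A'(0) = -1/2` (as `A = 1 / exp[0, ·]`). The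
operator is `2D (Φ(x₀ + h₂) - Φ(x₀ - h₁)) / (h₁ + h₂)`, a difference quotient of `Φ` over an
interval straddling `x₀`; such quotients converge to `Φ'(x₀)` whatever the ratio `h₁ / h₂`.
-/

open Real Filter

/-- The Wang–Peskin–Elston weight function: `A(u) = u / (exp u - 1)` for `u ≠ 0`,
and `A(0) = 1`. -/
noncomputable def wpeA (u : ℝ) : ℝ :=
  if u = 0 then 1 else u / (Real.exp u - 1)

open Set Asymptotics Topology

theorem taylorWithinEval_two_univ (f : ℝ → ℝ) (a x : ℝ) :
    taylorWithinEval f 2 univ a x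
      = f a + (x - a) * deriv f a + (x - a) ^ 2 / 2 * deriv (deriv f) a := by
  simp only [taylorWithinEval_succ, taylor_within_zero_eval, iteratedDerivWithin_univ,
    iteratedDeriv_succ, iteratedDeriv_zero, smul_eq_mul, Nat.factorial]
  push_cast
  ring

theorem HasDerivAt.tendsto_straddled_slope {f : ℝ → ℝ} {c x : ℝ} (hf : HasDerivAt f c x) :
    Tendsto (fun p : ℝ × ℝ => (f (x + p.2) - f (x - p.1)) / (p.1 + p.2))
      (𝓝[>] 0 ×ˢ 𝓝[>] 0) (𝓝 c) := by
  set F := 𝓝[>] (0 : ℝ) ×ˢ 𝓝[>] (0 : ℝ)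
  have hpos : ∀ᶠ p : ℝ × ℝ in F, 0 < p.1 ∧ 0 < p.2 :=
    prod_mem_prod self_mem_nhdsWithin self_mem_nhdsWithin
  have hfst : Tendsto Prod.fst F (𝓝 0) := tendsto_fst.mono_right nhdsWithin_le_nhds
  have hsnd : Tendsto Prod.snd F (𝓝 0) := tendsto_snd.mono_right nhdsWithin_le_nhds
  have hright : (fun p : ℝ × ℝ => f (x + p.2) - f x - p.2 * c) =o[F] Prod.snd := by
    have := (hasDerivAt_iff_isLittleO.mp hf).comp_tendsto
      (by simpa using tendsto_const_nhds.add hsnd : Tendsto (fun p : ℝ × ℝ => x + p.2) F (𝓝 x))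
    simpa [Function.comp_def] using this
  have hleft : (fun p : ℝ × ℝ => f (x - p.1) - f x + p.1 * c) =o[F] Prod.fst := by
    have := (hasDerivAt_iff_isLittleO.mp hf).comp_tendsto
      (by simpa using tendsto_const_nhds.sub hfst : Tendsto (fun p : ℝ × ℝ => x - p.1) F (𝓝 x))
    simpa [Function.comp_def, sub_eq_add_neg] using this
  have hfst_le : Prod.fst =O[F] fun p : ℝ × ℝ => p.1 + p.2 :=
    IsBigO.of_bound 1 <| hpos.mono fun p hp => by
      rw [one_mul, Real.norm_of_nonneg hp.1.le, Real.norm_of_nonneg (by linarith)]; linarith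
  have hsnd_le : Prod.snd =O[F] fun p : ℝ × ℝ => p.1 + p.2 :=
    IsBigO.of_bound 1 <| hpos.mono fun p hp => by
      rw [one_mul, Real.norm_of_nonneg hp.2.le, Real.norm_of_nonneg (by linarith)]; linarith
  have hsum : (fun p : ℝ × ℝ => f (x + p.2) - f (x - p.1) - (p.1 + p.2) * c)
      =o[F] fun p => p.1 + p.2 :=
    ((hright.trans_isBigO hsnd_le).sub (hleft.trans_isBigO hfst_le)).congr_left fun p => by ring
  rw [← add_zero c]
  refine (hsum.tendsto_div_nhds_zero.const_add c).congr' <| hpos.mono fun p hp => ?_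
  field_simp [(by linarith : p.1 + p.2 ≠ 0)]
  ring

theorem ContDiff.hasDerivAt_dslope {f : ℝ → ℝ} (hf : ContDiff ℝ 2 f) (a : ℝ) :
    HasDerivAt (dslope f a) (deriv (deriv f) a / 2) a := by
  rw [hasDerivAt_iff_isLittleO]
  have hquot : (fun x => (x - a)⁻¹ * (f x - taylorWithinEval f 2 univ a x))
      =o[𝓝 a] fun x => (x - a)⁻¹ * (x - a) ^ 2 :=
    (isBigO_refl _ _).mul_isLittleO (taylor_isLittleO_univ hf)
  refine hquot.congr (fun x => ?_) (fun x => ?_) <;> rcases eq_or_ne x a with rfl | hx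
  · simp [dslope_same]
  · rw [dslope_of_ne _ hx, slope_def_field, dslope_same, taylorWithinEval_two_univ, smul_eq_mul]
    field_simp [sub_ne_zero.mpr hx]
    ring
  · simp
  · field_simp [sub_ne_zero.mpr hx]

theorem wpeA_eq_inv_dslope_exp (u : ℝ) : wpeA u = (dslope exp 0 u)⁻¹ := by
  rcases eq_or_ne u 0 with rfl | hu
  · simp [wpeA, dslope_same]
  · rw [wpeA, if_neg hu, dslope_of_ne _ hu, slope_def_field, exp_zero, sub_zero, inv_div]

theorem hasDerivAt_wpeA_zero : HasDerivAt wpeA (-1 / 2) 0 := by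
  have hexp : HasDerivAt (dslope exp 0) (1 / 2) 0 := by
    simpa using contDiff_exp.hasDerivAt_dslope 0
  have hone : dslope exp 0 0 = 1 := by simp [dslope_same]
  rw [show wpeA = (dslope exp 0)⁻¹ from funext wpeA_eq_inv_dslope_exp]
  exact (hexp.inv (by rw [hone]; exact one_ne_zero)).congr_deriv (by rw [hone]; norm_num)

theorem wpeA_neg (u : ℝ) : wpeA (-u) = wpeA u + u := by
  rcases eq_or_ne u 0 with rfl | hu
  · simp [wpeA]
  have hexp : exp u - 1 ≠ 0 := sub_ne_zero.mpr (by simpa using hu)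
  rw [wpeA, wpeA, if_neg (neg_ne_zero.mpr hu), if_neg hu, exp_neg,
    show (exp u)⁻¹ - 1 = -(exp u - 1) / exp u by field_simp; ring]
  field_simp
  ring

noncomputable def wpeFlux (ρ V : ℝ → ℝ) (x₀ x : ℝ) : ℝ :=
  wpeA (V x₀ - V x) * dslope ρ x₀ x + ρ x₀ * dslope V x₀ x

theorem wpeFlux_eq {ρ V : ℝ → ℝ} {x₀ x : ℝ} (hx : x ≠ x₀) :
    wpeFlux ρ V x₀ x = (wpeA (V x₀ - V x) * ρ x - wpeA (V x - V x₀) * ρ x₀) / (x - x₀) := by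
  rw [wpeFlux, dslope_of_ne _ hx, dslope_of_ne _ hx, slope_def_field, slope_def_field,
    ← neg_sub (V x₀), wpeA_neg]
  field_simp [sub_ne_zero.mpr hx]
  ring

theorem hasDerivAt_wpeFlux {ρ V : ℝ → ℝ} (hρ : ContDiff ℝ 2 ρ) (hV : ContDiff ℝ 2 V) (x₀ : ℝ) :
    HasDerivAt (wpeFlux ρ V x₀)
      ((deriv (deriv ρ) x₀ + deriv ρ x₀ * deriv V x₀ + ρ x₀ * deriv (deriv V) x₀) / 2) x₀ := by
  have hV' : HasDerivAt (fun x => V x₀ - V x) (-deriv V x₀) x₀ :=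
    ((hV.differentiable (by norm_num)).differentiableAt.hasDerivAt).const_sub _
  have hA : HasDerivAt (fun x => wpeA (V x₀ - V x)) (-1 / 2 * -deriv V x₀) x₀ :=
    HasDerivAt.comp (h₂ := wpeA) x₀ (by simpa using hasDerivAt_wpeA_zero) hV'
  have := (hA.mul (hρ.hasDerivAt_dslope x₀)).add
    ((hV.hasDerivAt_dslope x₀).const_mul (ρ x₀))
  refine this.congr_deriv ?_
  simp only [mul_neg, dslope_same, neg_mul, wpeA, sub_self, ↓reduceIte, one_mul]
  ring

theorem wpe_nonuniform_consistency_general (ρ V : ℝ → ℝ)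
    (hρ : ContDiff ℝ 2 ρ) (hV : ContDiff ℝ 2 V) (D : ℝ) (x₀ : ℝ) :
    Tendsto
      (fun p : ℝ × ℝ =>
        2 / (p.1 + p.2) *
          (D / p.2 *
              (wpeA (V x₀ - V (x₀ + p.2)) * ρ (x₀ + p.2)
                - wpeA (V (x₀ + p.2) - V x₀) * ρ x₀)
            - D / p.1 *
              (wpeA (V (x₀ - p.1) - V x₀) * ρ x₀
                - wpeA (V x₀ - V (x₀ - p.1)) * ρ (x₀ - p.1))))
      ((nhdsWithin (0 : ℝ) (Set.Ioi 0)) ×ˢ (nhdsWithin (0 : ℝ) (Set.Ioi 0)))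
      (nhds (D * (deriv (deriv ρ) x₀ + deriv ρ x₀ * deriv V x₀ + ρ x₀ * deriv (deriv V) x₀))) := by
  have hlim := (hasDerivAt_wpeFlux hρ hV x₀).tendsto_straddled_slope.const_mul (2 * D)
  rw [show ∀ a : ℝ, 2 * D * (a / 2) = D * a from fun a => by ring] at hlim
  have hpos : ∀ᶠ p : ℝ × ℝ in 𝓝[>] 0 ×ˢ 𝓝[>] 0, 0 < p.1 ∧ 0 < p.2 :=
    prod_mem_prod self_mem_nhdsWithin self_mem_nhdsWithin
  refine hlim.congr' (hpos.mono fun p ⟨h₁, h₂⟩ => ?_)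
  rw [wpeFlux_eq (by linarith), wpeFlux_eq (by linarith)]
  simp only [add_sub_cancel_left, sub_sub_cancel_left]
  field_simp
  ring

/-- Consistency of the non-uniform Wang–Peskin–Elston discretization: for `ρ, V` twice
continuously differentiable and `D > 0`, as `(h₁, h₂) → (0⁺, 0⁺)` (no constraint on the
ratio `h₁/h₂`) the non-uniform flux-difference operator converges to
`D (ρ'' + ρ' V' + ρ V'')(x₀)`. -/
theorem wpe_nonuniform_consistency (ρ V : ℝ → ℝ)
    (hρ : ContDiff ℝ 2 ρ) (hV : ContDiff ℝ 2 V) (D : ℝ) (hD : 0 < D) (x₀ : ℝ) :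
    Tendsto
      (fun p : ℝ × ℝ =>
        2 / (p.1 + p.2) *
          (D / p.2 *
              (wpeA (V x₀ - V (x₀ + p.2)) * ρ (x₀ + p.2)
                - wpeA (V (x₀ + p.2) - V x₀) * ρ x₀)
            - D / p.1 *
              (wpeA (V (x₀ - p.1) - V x₀) * ρ x₀
                - wpeA (V x₀ - V (x₀ - p.1)) * ρ (x₀ - p.1))))
      ((nhdsWithin (0 : ℝ) (Set.Ioi 0)) ×ˢ (nhdsWithin (0 : ℝ) (Set.Ioi 0)))
      (nhds (D * (deriv (deriv ρ) x₀ + deriv ρ x₀ * deriv V x₀ + ρ x₀ * deriv (deriv V) x₀))) :=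
  wpe_nonuniform_consistency_general ρ V hρ hV D x₀
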